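/- arXiv:1805.05169 — 2 statements merged into one kernel-verified Lean document; each statement's English description precedes it below -/
import Mathlib

section
/- Suppose λ and λ' are real roots of p with λ ≠ λ'. Then λ' − λ is a root of the polynomial q(w) = w^{n-1} + Σ_{i=2}^{n-1} (Σ_{k=i}^{n} a_k C(k,i) λ^{k-i}) w^{i-1} + (n λ^{n-1} + Σ_{i=1}^{n-1} i a_i λ^{i-1}), which is the characteristic polynomial of the reduced equation with parameter μ = λ. Consequently, if p has n distinct real roots λ_1 > λ_2 > … > λ_n, then for each i the set of roots of the characteristic polynomial of the reduced equation with μ = λ_i is exactly {λ_j − λ_i : j ≠ i} = {γ_j(λ_i) : j = 1,…,n−1}, where γ_j(λ_i) = λ_j − λ_i for j = 1,…,i−1 and γ_j(λ_i) = λ_{j+1} − λ_i for j = i,…,n−1. -/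
open MeasureTheory Filter Finset Real Set

noncomputable section

/-- Heaviside function: 1 for `0 ≤ x`, 0 otherwise. -/
def heav (x : ℝ) : ℝ := if 0 ≤ x then 1 else 0

/-- `Υ₀ = ∏_{i<j} (γ_j - γ_i)`. -/
def ups0 {d : ℕ} (γ : Fin d → ℝ) : ℝ :=
  ∏ p ∈ Finset.univ.filter (fun p : Fin d × Fin d => p.1 < p.2), (γ p.2 - γ p.1)

/-- `Υ_ℓ = ∏_{i<j, i≠ℓ, j≠ℓ} (γ_j - γ_i)`. -/
def upsl {d : ℕ} (γ : Fin d → ℝ) (ℓ : Fin d) : ℝ :=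
  ∏ p ∈ Finset.univ.filter
      (fun p : Fin d × Fin d => p.1 < p.2 ∧ p.1 ≠ ℓ ∧ p.2 ≠ ℓ), (γ p.2 - γ p.1)

/-- The kernel `g_j(t,s)` (the `j`-th `t`-derivative of the Green function
off the diagonal).  Here the index `ℓ : Fin d` corresponds to `ℓ+1 = 1,…,d`. -/
def kern {d : ℕ} (γ : Fin d → ℝ) (j : ℕ) (t s : ℝ) : ℝ :=
  -(1 / ups0 γ) *
    ∑ ℓ : Fin d, ((-1 : ℝ) ^ ((ℓ : ℕ) + 1) * upsl γ ℓ) * (-γ ℓ) ^ j *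
      Real.exp (-γ ℓ * (t - s)) * heav ((if 0 < γ ℓ then (1 : ℝ) else -1) * (t - s))

/-- Multi-indices `α ∈ ℕ₀^d` with `|α| ≤ n`. -/
def mSet (n d : ℕ) : Finset (Fin d → ℕ) :=
  (Fintype.piFinset fun _ : Fin d => Finset.range (n + 1)).filter fun α => ∑ i, α i ≤ n

/-- Multi-indices `α ∈ ℕ₀^d` with `|α| = k` (for `k ≤ n`). -/
def mDeg (n d k : ℕ) : Finset (Fin d → ℕ) :=
  (Fintype.piFinset fun _ : Fin d => Finset.range (n + 1)).filter fun α => ∑ i, α i = k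

/-- `P(t,x) = Σ_{0 ≤ |α| ≤ n} Ω_α(t) x^α`. -/
def Ppoly (n d : ℕ) (Ω : (Fin d → ℕ) → ℝ → ℝ) (t : ℝ) (x : Fin d → ℝ) : ℝ :=
  ∑ α ∈ mSet n d, Ω α t * ∏ i, x i ^ α i

/-- `k`-th derivative on `[t₀,∞)`. -/
def iDer (t₀ : ℝ) (k : ℕ) (z : ℝ → ℝ) : ℝ → ℝ := iteratedDerivWithin k z (Set.Ici t₀)

/-- Membership in `C₀^{n-2}([t₀,∞))`. -/
def memC0 (n : ℕ) (t₀ : ℝ) (z : ℝ → ℝ) : Prop :=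
  ContDiffOn ℝ (n - 2 : ℕ) z (Set.Ici t₀) ∧
    ∀ k ≤ n - 2, Filter.Tendsto (iDer t₀ k z) Filter.atTop (nhds 0)

/-- `‖z‖₀ < 1`, i.e. `sup_{t ≥ t₀} Σ_{k=0}^{n-2} |z^(k)(t)| < 1`. -/
def normLt1 (n : ℕ) (t₀ : ℝ) (z : ℝ → ℝ) : Prop :=
  ∃ c < (1 : ℝ), ∀ t ≥ t₀, ∑ k ∈ Finset.range (n - 1), |iDer t₀ k z t| ≤ c

/-- `z` is an `(n-1)`-times differentiable solution on `[t₀,∞)` of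
`z^(n-1) + Σ_{i=0}^{n-2} b_i z^(i) = P(t, z, z', …, z^(n-2))`. -/
def isRicSol (n : ℕ) (t₀ : ℝ) (b : ℕ → ℝ) (Ω : (Fin (n - 1) → ℕ) → ℝ → ℝ)
    (z : ℝ → ℝ) : Prop :=
  (∀ m < n - 1, DifferentiableOn ℝ (iDer t₀ m z) (Set.Ici t₀)) ∧
    ∀ t ≥ t₀,
      iDer t₀ (n - 1) z t + ∑ i ∈ Finset.range (n - 1), b i * iDer t₀ i z t =
        Ppoly n (n - 1) Ω t fun j => iDer t₀ (j : ℕ) z t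

/-- `R(t)`. -/
def Rfun (n : ℕ) (t₀ : ℝ) (γ : Fin (n - 1) → ℝ) (Ω : (Fin (n - 1) → ℕ) → ℝ → ℝ)
    (t : ℝ) : ℝ :=
  ∑ j ∈ Finset.range (n - 1), |∫ s in Set.Ioi t₀, kern γ j t s * Ω (fun _ => 0) s|

/-- `L_k(t)`. -/
def Lfun (n : ℕ) (t₀ : ℝ) (γ : Fin (n - 1) → ℝ) (Ω : (Fin (n - 1) → ℕ) → ℝ → ℝ)
    (k : ℕ) (t : ℝ) : ℝ :=
  ∫ s in Set.Ioi t₀,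
    (∑ j ∈ Finset.range (n - 1), |kern γ j t s|) * ∑ α ∈ mDeg n (n - 1) k, |Ω α s|

/-- `Φ₁`. -/
def Phi1 {d : ℕ} (n : ℕ) (γ : Fin d → ℝ) : ℝ :=
  |ups0 γ|⁻¹ * ∑ ℓ : Fin d, |upsl γ ℓ| * ∑ j ∈ Finset.range (n - 1), |γ ℓ| ^ j

/-- `p(x) = Σ_{k=0}^n a_k x^k`. -/
def pEval (n : ℕ) (a : ℕ → ℝ) (x : ℝ) : ℝ := ∑ k ∈ Finset.range (n + 1), a k * x ^ k

/-- `γ_j(λ_i)` (0-based indices). -/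
def gam {n : ℕ} (lam : Fin n → ℝ) (i : Fin n) (j : Fin (n - 1)) : ℝ :=
  if h : (j : ℕ) < (i : ℕ) then
    lam ⟨(j : ℕ), lt_of_lt_of_le (lt_of_lt_of_le j.isLt (Nat.sub_le n 1)) le_rfl⟩ - lam i
  else
    lam ⟨(j : ℕ) + 1, by have := j.isLt; omega⟩ - lam i

/-- characteristic polynomial of the reduced equation with parameter `μ`. -/
def qEval (n : ℕ) (a : ℕ → ℝ) (μ : ℝ) (w : ℝ) : ℝ :=
  w ^ (n - 1) +
    (∑ i ∈ Finset.Ico 2 n,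
      (∑ k ∈ Finset.Icc i n, a k * (Nat.choose k i : ℝ) * μ ^ (k - i)) * w ^ (i - 1)) +
    ((n : ℝ) * μ ^ (n - 1) + ∑ i ∈ Finset.Ico 1 n, (i : ℝ) * a i * μ ^ (i - 1))

/-- slot values for `w = z + μ`: `w^(0) = z+μ`, `w^(ℓ) = z^(ℓ)` for `ℓ ≥ 1`;
`v k` stands for `z^(k)(t)`. -/
def wD (μ : ℝ) (v : ℕ → ℝ) (ℓ : ℕ) : ℝ := if ℓ = 0 then v 0 + μ else v ℓ

/-- partial sums of a tuple: `psum ℓ r = ℓ_1 + … + ℓ_r` (0-based entries). -/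
def psum {m : ℕ} (ℓ : Fin m → ℕ) (r : ℕ) : ℕ :=
  ∑ q ∈ Finset.univ.filter (fun q : Fin m => (q : ℕ) < r), ℓ q

/-- `S_{0,j}`. -/
def S0 (μ : ℝ) (v : ℕ → ℝ) (j : ℕ) : ℝ :=
  wD μ v (j - 1) + ((j : ℝ) - 1) * wD μ v (j - 2) * wD μ v 0

open Classical in
/-- `S_{m,j}` for `m ≥ 1`. -/
def Sm (μ : ℝ) (v : ℕ → ℝ) (m j : ℕ) : ℝ :=
  ∑ ℓ ∈ (Fintype.piFinset fun _ : Fin m => Finset.range (j + 1)).filter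
      (fun ℓ => ∀ r ∈ Finset.Icc 1 m, psum ℓ r + m + 2 ≤ j),
    ((j - 1).choose (psum ℓ 1) : ℝ) *
      (∏ i ∈ Finset.Ico 1 m,
        (((j - psum ℓ i - i - 1).choose (psum ℓ (i + 1) - psum ℓ i) : ℕ) : ℝ)) *
      (∏ i : Fin m, wD μ v (ℓ i)) *
      (wD μ v (j - psum ℓ m - m - 1) +
        ((j - psum ℓ m - m - 1 : ℕ) : ℝ) * wD μ v (j - psum ℓ m - m - 2) * wD μ v 0)

/-- `S_{m,j}` for all `m ≥ 0`. -/
def Sfull (μ : ℝ) (v : ℕ → ℝ) (m j : ℕ) : ℝ :=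
  if m = 0 then S0 μ v j else Sm μ v m j

/-- The nonlinearity `F(μ, t, r₀(t),…,r_{n-1}(t), v₀,…,v_{n-2})`. -/
def Ffun (n : ℕ) (a : ℕ → ℝ) (r : ℕ → ℝ → ℝ) (μ : ℝ) (t : ℝ) (v : ℕ → ℝ) : ℝ :=
  ((n : ℝ) - 1) * v (n - 2) * v 0 + (∑ m ∈ Finset.Icc 1 (n - 3), Sfull μ v m n) +
    (∑ i ∈ Finset.Ico 3 n,
      (a i * (((i : ℝ) - 1) * v (i - 2) * v 0 + (∑ m ∈ Finset.Icc 1 (i - 3), Sfull μ v m i) +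
          v (i - 1) * v 1 + ∑ j ∈ Finset.Icc 1 (i - 2), (Nat.choose i j : ℝ) * v (i - j) * μ ^ j) +
        r i t * ((∑ m ∈ Finset.Icc 0 (i - 3), Sfull μ v m i) + v (i - 1) * v 1 +
          (v 0 + μ) ^ i))) +
    a 2 * v 0 ^ 2 + r 2 t * (v 1 + (v 0 + μ) ^ 2) + r 1 t * (v 0 + μ) + r 0 t

/-- `ℍ(t,μ)`. -/
def Hfun (n : ℕ) (a : ℕ → ℝ) (r : ℕ → ℝ → ℝ) (μ : ℝ) (t : ℝ) : ℝ :=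
  Ffun n a r μ t (fun _ => 1) - Ffun n a r μ t (fun _ => 0)

/-- Linear part of the reduced equation, applied to `z` at `t`. -/
def reducedLHS (n : ℕ) (a : ℕ → ℝ) (μ : ℝ) (t₀ : ℝ) (z : ℝ → ℝ) (t : ℝ) : ℝ :=
  iDer t₀ (n - 1) z t +
    (∑ i ∈ Finset.Ico 2 n,
      (∑ k ∈ Finset.Icc i n, a k * (Nat.choose k i : ℝ) * μ ^ (k - i)) * iDer t₀ (i - 1) z t) +
    ((n : ℝ) * μ ^ (n - 1) + ∑ i ∈ Finset.Ico 1 n, (i : ℝ) * a i * μ ^ (i - 1)) * z t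

/-- `z` is an `(n-1)`-times differentiable solution on `[t₀,∞)` of the reduced
equation with parameter `μ`. -/
def isReducedSol (n : ℕ) (a : ℕ → ℝ) (r : ℕ → ℝ → ℝ) (μ : ℝ) (t₀ : ℝ) (z : ℝ → ℝ) : Prop :=
  (∀ m < n - 1, DifferentiableOn ℝ (iDer t₀ m z) (Set.Ici t₀)) ∧
    ∀ t ≥ t₀, reducedLHS n a μ t₀ z t = -Ffun n a r μ t fun k => iDer t₀ k z t

/-- `y` is an `n`-times differentiable solution on `[t₀,∞)` of the Poincaré-type
equation `y^(n) + Σ_{i=0}^{n-1} (a_i + r_i(t)) y^(i) = 0`. -/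
def isPoincareSol (n : ℕ) (a : ℕ → ℝ) (r : ℕ → ℝ → ℝ) (t₀ : ℝ) (y : ℝ → ℝ) : Prop :=
  (∀ m < n, DifferentiableOn ℝ (iDer t₀ m y) (Set.Ici t₀)) ∧
    ∀ t ≥ t₀, iDer t₀ n y t + ∑ i ∈ Finset.range n, (a i + r i t) * iDer t₀ i y t = 0

/-- Wronskian `W[y_1,…,y_n](t) = det (y_i^{(j-1)}(t))`. -/
def wron (n : ℕ) (t₀ : ℝ) (y : Fin n → ℝ → ℝ) (t : ℝ) : ℝ :=
  Matrix.det (Matrix.of fun i j : Fin n => iDer t₀ (j : ℕ) (y i) t)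


/-- `C₀`-norm: `‖z‖₀ = sup_{t ≥ t₀} Σ_{k=0}^{n-2} |z^(k)(t)|`. -/
noncomputable def C0norm (n : ℕ) (t₀ : ℝ) (z : ℝ → ℝ) : ℝ :=
  ⨆ t : Set.Ici t₀, ∑ k ∈ Finset.range (n - 1), |iDer t₀ k z (t : ℝ)|

/-- `π_i = Π_{j ≠ i} (λ_j - λ_i)`. -/
noncomputable def pii {n : ℕ} (lam : Fin n → ℝ) (i : Fin n) : ℝ :=
  ∏ j ∈ Finset.univ.filter (fun j : Fin n => j ≠ i), (lam j - lam i)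

/-- Hypothesis (H2), together with finiteness of the corresponding integrals. -/
def hypH2 (n : ℕ) (t₀ : ℝ) (r : ℕ → ℝ → ℝ) (lam : Fin n → ℝ) : Prop :=
  ∀ i : Fin n,
    (∀ ℓ < n, ∀ t ≥ t₀, ∀ j ≤ n - 2,
      MeasureTheory.IntegrableOn (fun s => kern (gam lam i) j t s * r ℓ s) (Set.Ioi t₀)) ∧
    (∀ t ≥ t₀,
      MeasureTheory.IntegrableOn
        (fun s => (∑ j ∈ Finset.range (n - 1), |kern (gam lam i) j t s|) *
          |∑ ℓ ∈ Finset.range n, lam i ^ ℓ * r ℓ s|) (Set.Ioi t₀)) ∧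
    (∀ ℓ < n,
      Filter.Tendsto
        (fun t => ∑ j ∈ Finset.range (n - 1), |∫ s in Set.Ioi t₀, kern (gam lam i) j t s * r ℓ s|)
        Filter.atTop (nhds 0)) ∧
    Filter.Tendsto
      (fun t => ∫ s in Set.Ioi t₀,
        (∑ j ∈ Finset.range (n - 1), |kern (gam lam i) j t s|) *
          |∑ ℓ ∈ Finset.range n, lam i ^ ℓ * r ℓ s|)
      Filter.atTop (nhds 0)

/-- Hypothesis (H3). -/
def hypH3 (n : ℕ) (t₀ : ℝ) (a : ℕ → ℝ) (r : ℕ → ℝ → ℝ) (lam : Fin n → ℝ) : Prop :=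
  ∀ i : Fin n, ∀ k : Fin (n - 1), ∃ σ : ℝ, 0 ≤ σ ∧ σ < 1 / Phi1 n (gam lam i) ∧
    ∀ t ≥ t₀,
      (∫ s in Set.Ioi t₀, Real.exp (-(gam lam i k) * (t - s)) * |Hfun n a r (lam i) s|) ≤ σ

end

/-! Since the coefficients of `q_μ` are the Taylor coefficients `p⁽ⁱ⁾(μ)/i!` of `p` at `μ`, one has
`w · q_μ(w) = p(w + μ) - p(μ)`; so `q_λ` vanishes at `λ' - λ ≠ 0` whenever `p(λ) = p(λ') = 0`.
If `p` has `n` distinct roots then `p = ∏ⱼ (x - λⱼ)`, hence `q_{λᵢ}(w) = ∏_{j ≠ i} (w - (λⱼ - λᵢ))`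
for `w ≠ 0`, and by continuity also at `w = 0`. -/

namespace Polynomial

theorem Monic.eq_prod_X_sub_C_of_injective {R ι : Type*} [CommRing R] [IsDomain R] [Fintype ι]
    {p : R[X]} (hp : p.Monic) (hdeg : p.natDegree = Fintype.card ι) {v : ι → R}
    (hv : Function.Injective v) (hroot : ∀ i, p.IsRoot (v i)) :
    p = ∏ i, (X - C (v i)) := by
  classical
  have hmon : (∏ i, (X - C (v i))).Monic := monic_prod_of_monic _ _ fun i _ => monic_X_sub_C _
  have hdeg' : (∏ i, (X - C (v i))).natDegree = Fintype.card ι := by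
    simp [natDegree_prod_of_monic _ _ fun i _ => monic_X_sub_C (v i)]
  refine eq_of_degree_le_of_eval_index_eq (v := v) Finset.univ hv.injOn ?_ ?_ ?_ ?_
  · rw [degree_eq_natDegree hp.ne_zero, hdeg, Finset.card_univ]
  · rw [degree_eq_natDegree hp.ne_zero, degree_eq_natDegree hmon.ne_zero, hdeg, hdeg']
  · rw [hp.leadingCoeff, hmon.leadingCoeff]
  · intro i _
    rw [(hroot i).eq_zero, eval_prod, Finset.prod_eq_zero (Finset.mem_univ i) (by simp)]

end Polynomial

open Polynomial in
theorem pEval_eq_eval_X_pow_add (n : ℕ) (a : ℕ → ℝ) (han : a n = 1) (x : ℝ) :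
    pEval n a x = (X ^ n + ∑ k : Fin n, C (a k) * X ^ (k : ℕ)).eval x := by
  simp [pEval, eval_finsetSum, Finset.sum_range_succ, han,
    Fin.sum_univ_eq_sum_range (fun k => a k * x ^ k), add_comm]

open Polynomial in
theorem pEval_eq_prod_of_injective {n : ℕ} {a : ℕ → ℝ} (han : a n = 1) {lam : Fin n → ℝ}
    (hlam : Function.Injective lam) (hroot : ∀ i, pEval n a (lam i) = 0) (x : ℝ) :
    pEval n a x = ∏ j, (x - lam j) := by
  have hmon : (X ^ n + ∑ k : Fin n, C (a k) * X ^ (k : ℕ)).Monic :=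
    monic_X_pow_add (degree_sum_fin_lt _)
  rw [pEval_eq_eval_X_pow_add n a han, hmon.eq_prod_X_sub_C_of_injective _ hlam, eval_prod]
  · simp
  · intro i; rw [IsRoot, ← pEval_eq_eval_X_pow_add n a han]; exact hroot i
  · rw [natDegree_add_eq_left_of_degree_lt (by simpa using degree_sum_fin_lt _), natDegree_X_pow,
      Fintype.card_fin]

def taylorCoeff (n : ℕ) (a : ℕ → ℝ) (μ : ℝ) (i : ℕ) : ℝ :=
  ∑ k ∈ Finset.Icc i n, a k * (k.choose i : ℝ) * μ ^ (k - i)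

theorem pEval_add_eq_sum_taylorCoeff (n : ℕ) (a : ℕ → ℝ) (μ w : ℝ) :
    pEval n a (w + μ) = ∑ i ∈ Finset.range (n + 1), taylorCoeff n a μ i * w ^ i := by
  simp_rw [pEval, add_pow, Finset.mul_sum, taylorCoeff, Finset.sum_mul]
  rw [Finset.sum_comm' (t' := Finset.range (n + 1)) (s' := fun i => Finset.Icc i n)
    (by intro k i; simp only [Finset.mem_range, Finset.mem_Icc]; omega)]
  exact Finset.sum_congr rfl fun i _ => Finset.sum_congr rfl fun k _ => by ring

theorem taylorCoeff_zero (n : ℕ) (a : ℕ → ℝ) (μ : ℝ) : taylorCoeff n a μ 0 = pEval n a μ := by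
  simp [taylorCoeff, pEval, Nat.range_succ_eq_Icc_zero]

theorem taylorCoeff_one {n : ℕ} (hn : 1 ≤ n) {a : ℕ → ℝ} (han : a n = 1) (μ : ℝ) :
    taylorCoeff n a μ 1 = n * μ ^ (n - 1) + ∑ i ∈ Finset.Ico 1 n, (i : ℝ) * a i * μ ^ (i - 1) := by
  rw [taylorCoeff, ← Finset.Ico_insert_right hn, Finset.sum_insert Finset.right_notMem_Ico, han]
  simp only [Nat.choose_one_right]
  exact congrArg₂ _ (by ring) (Finset.sum_congr rfl fun i _ => by ring)

theorem taylorCoeff_self (n : ℕ) (a : ℕ → ℝ) (μ : ℝ) : taylorCoeff n a μ n = a n := by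
  simp [taylorCoeff]

theorem qEval_eq_sum_taylorCoeff {n : ℕ} (hn : 2 ≤ n) {a : ℕ → ℝ} (han : a n = 1) (μ w : ℝ) :
    qEval n a μ w = ∑ i ∈ Finset.Icc 1 n, taylorCoeff n a μ i * w ^ (i - 1) := by
  have hq : qEval n a μ w = w ^ (n - 1) + ∑ i ∈ Finset.Ico 2 n, taylorCoeff n a μ i * w ^ (i - 1) +
      taylorCoeff n a μ 1 := by
    rw [taylorCoeff_one (by omega) han]; rfl
  rw [hq, ← Finset.Ico_insert_right (by omega : 1 ≤ n), Finset.sum_insert Finset.right_notMem_Ico,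
    ← Finset.insert_Ico_add_one_left_eq_Ico (by omega : 1 < n), Finset.sum_insert (by simp),
    taylorCoeff_self, han]
  simp only [one_mul, Nat.sub_self, pow_zero, mul_one, Nat.reduceAdd]
  ring

theorem mul_qEval {n : ℕ} (hn : 2 ≤ n) {a : ℕ → ℝ} (han : a n = 1) (μ w : ℝ) :
    w * qEval n a μ w = pEval n a (w + μ) - pEval n a μ := by
  rw [qEval_eq_sum_taylorCoeff hn han, pEval_add_eq_sum_taylorCoeff, Finset.range_eq_Ico,
    Finset.sum_eq_sum_Ico_succ_bot (by omega), taylorCoeff_zero, Finset.mul_sum]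
  simp only [pow_zero, mul_one, add_sub_cancel_left]
  refine Finset.sum_congr (by ext; simp) fun i hi => ?_
  rw [mul_left_comm, ← pow_succ', Nat.sub_add_cancel (Finset.mem_Icc.mp hi).1]

theorem continuous_qEval (n : ℕ) (a : ℕ → ℝ) (μ : ℝ) : Continuous (qEval n a μ) := by
  unfold qEval; fun_prop

theorem qEval_eq_prod {n : ℕ} (hn : 2 ≤ n) {a : ℕ → ℝ} (han : a n = 1) {lam : Fin n → ℝ}
    (hlam : Function.Injective lam) (hroot : ∀ i, pEval n a (lam i) = 0) (i : Fin n) :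
    qEval n a (lam i) = fun w => ∏ j ∈ Finset.univ.erase i, (w - (lam j - lam i)) := by
  refine (continuous_qEval n a _).ext_on (dense_compl_singleton 0) (by fun_prop) fun w hw => ?_
  refine mul_left_cancel₀ (show w ≠ 0 from hw) ?_
  rw [mul_qEval hn han, pEval_eq_prod_of_injective han hlam hroot, hroot i, sub_zero,
    ← Finset.mul_prod_erase _ _ (Finset.mem_univ i), add_sub_cancel_right]
  exact congrArg _ (Finset.prod_congr rfl fun j _ => by ring)

theorem gam_eq_succAbove {m : ℕ} (lam : Fin (m + 1) → ℝ) (i : Fin (m + 1)) (j : Fin m) :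
    gam lam i j = lam (i.succAbove j) - lam i := by
  by_cases h : (j : ℕ) < i
  · rw [gam, dif_pos h, Fin.succAbove_of_castSucc_lt _ _ h]; rfl
  · rw [gam, dif_neg h, Fin.succAbove_of_le_castSucc _ _ (not_lt.mp h)]; rfl

theorem range_gam {n : ℕ} (lam : Fin n → ℝ) (i : Fin n) :
    Set.range (gam lam i) = {w : ℝ | ∃ j : Fin n, j ≠ i ∧ w = lam j - lam i} := by
  obtain ⟨m, rfl⟩ : ∃ m, n = m + 1 := Nat.exists_eq_add_one_of_ne_zero (Fin.pos i).ne'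
  rw [show gam lam i = (fun k => lam k - lam i) ∘ i.succAbove from funext (gam_eq_succAbove lam i),
    Set.range_comp, Fin.range_succAbove]
  ext w
  simp [eq_comm]

theorem stmt3 (n : ℕ) (hn : 2 ≤ n) (a : ℕ → ℝ) (han : a n = 1) :
    (∀ lam lam' : ℝ, pEval n a lam = 0 → pEval n a lam' = 0 → lam ≠ lam' →
      qEval n a lam (lam' - lam) = 0) ∧
    (∀ lam : Fin n → ℝ, StrictAnti lam → (∀ i, pEval n a (lam i) = 0) → ∀ i : Fin n,
      {w : ℝ | qEval n a (lam i) w = 0} = {w : ℝ | ∃ j : Fin n, j ≠ i ∧ w = lam j - lam i} ∧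
      Set.range (gam lam i) = {w : ℝ | ∃ j : Fin n, j ≠ i ∧ w = lam j - lam i}) := by
  refine ⟨fun lam lam' hlam hlam' hne => ?_, fun lam hanti hroot i => ⟨?_, range_gam lam i⟩⟩
  · have h := mul_qEval hn han lam (lam' - lam)
    rw [sub_add_cancel, hlam, hlam', sub_zero] at h
    exact (mul_eq_zero.mp h).resolve_left (sub_ne_zero.mpr hne.symm)
  · ext w
    simp [qEval_eq_prod hn han hanti.injective hroot i, Finset.prod_eq_zero_iff, sub_eq_zero]
end

section
/- Assume hypothesis (R1) and that L_k(t) < ∞ for every t ≥ t_0 and every k = 1,…,n. Let η > 0 and let z_1, z_2 : [t_0,∞) → ℝ be (n−2)-times continuously differentiable with Σ_{j=0}^{n-2} |z_m^(j)(t)| ≤ η for all t ≥ t_0 (m = 1,2). Then for every t ≥ t_0: Σ_{j=0}^{n-2} | ∫_{t_0}^∞ g_j(t,s) [ P(s, z_1(s),…,z_1^(n-2)(s)) − P(s, z_2(s),…,z_2^(n-2)(s)) ] ds | ≤ ( Σ_{k=1}^{n} k η^{k-1} L_k(t) ) · sup_{s≥t_0} Σ_{j=0}^{n-2} |z_1^(j)(s)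 − z_2^(j)(s)|. -/
/-!
On the cube of radius `η` a monomial of degree `k` is Lipschitz with constant `k η ^ (k - 1)`
with respect to the largest coordinate difference (telescope one factor at a time). Grouping the
monomials of `P` by degree gives
`|P(s, x) - P(s, y)| ≤ Σ_k k η ^ (k - 1) (Σ_{|α| = k} |Ω_α(s)|) · D`, where `D` bounds the
coordinate differences, here the supremum of `Σ_j |z₁^(j) - z₂^(j)|`. Multiplying by `|g_j(t, s)|`,
integrating and summing over `j` turns the weights `Σ_{|α| = k} |Ω_α|` into `L_k(t)`.
-/

open MeasureTheory Filter Finset Real Set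

section MonomialLipschitz

variable {R : Type*} [CommRing R] [LinearOrder R] [IsStrictOrderedRing R]

theorem natCast_mul_pow_pred_mul_pow (η : R) (a b : ℕ) :
    (a : R) * η ^ (a - 1) * η ^ b = a * η ^ (a + b - 1) := by
  rcases Nat.eq_zero_or_pos a with rfl | ha
  · simp
  · rw [mul_assoc, ← pow_add, Nat.sub_add_comm ha]

theorem abs_prod_pow_le {ι : Type*} {s : Finset ι} {y : ι → R} {η : R} (α : ι → ℕ)
    (hy : ∀ i ∈ s, |y i| ≤ η) : |∏ i ∈ s, y i ^ α i| ≤ η ^ (∑ i ∈ s, α i) := by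
  rw [Finset.abs_prod, ← Finset.prod_pow_eq_pow_sum]
  exact Finset.prod_le_prod (fun i _ => abs_nonneg _) fun i hi => by
    rw [abs_pow]; exact pow_le_pow_left₀ (abs_nonneg _) (hy i hi) _

theorem abs_prod_pow_sub_prod_pow_le {ι : Type*} [DecidableEq ι] {s : Finset ι}
    {x y : ι → R} {η D : R} (α : ι → ℕ) (hx : ∀ i ∈ s, |x i| ≤ η) (hy : ∀ i ∈ s, |y i| ≤ η)
    (hD : ∀ i ∈ s, |x i - y i| ≤ D) :
    |∏ i ∈ s, x i ^ α i - ∏ i ∈ s, y i ^ α i| ≤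
      (∑ i ∈ s, α i : ℕ) * η ^ (∑ i ∈ s, α i - 1) * D := by
  induction s using Finset.induction_on with
  | empty => simp
  | insert a s ha ih =>
    simp only [Finset.mem_insert, forall_eq_or_imp] at hx hy hD
    have hη : 0 ≤ η := (abs_nonneg _).trans hx.1
    have hD₀ : 0 ≤ D := (abs_nonneg _).trans hD.1
    have hpow : |x a ^ α a - y a ^ α a| ≤ α a * η ^ (α a - 1) * D :=
      calc |x a ^ α a - y a ^ α a|
          ≤ |x a - y a| * α a * max |x a| |y a| ^ (α a - 1) := abs_pow_sub_pow_le _ _ _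
        _ ≤ D * α a * η ^ (α a - 1) := by
          gcongr
          exacts [hD.1, max_le hx.1 hy.1]
        _ = α a * η ^ (α a - 1) * D := by ring
    rw [Finset.prod_insert ha, Finset.prod_insert ha, Finset.sum_insert ha]
    calc |x a ^ α a * ∏ i ∈ s, x i ^ α i - y a ^ α a * ∏ i ∈ s, y i ^ α i|
        = |x a ^ α a * (∏ i ∈ s, x i ^ α i - ∏ i ∈ s, y i ^ α i) +
            (x a ^ α a - y a ^ α a) * ∏ i ∈ s, y i ^ α i| := by ring_nf
      _ ≤ |x a ^ α a| * |∏ i ∈ s, x i ^ α i - ∏ i ∈ s, y i ^ α i| +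
            |x a ^ α a - y a ^ α a| * |∏ i ∈ s, y i ^ α i| := by
          rw [← abs_mul, ← abs_mul]; exact abs_add_le _ _
      _ ≤ η ^ α a * ((∑ i ∈ s, α i : ℕ) * η ^ (∑ i ∈ s, α i - 1) * D) +
            α a * η ^ (α a - 1) * D * η ^ (∑ i ∈ s, α i) := by
          gcongr
          · rw [abs_pow]; exact pow_le_pow_left₀ (abs_nonneg _) hx.1 _
          · exact ih hx.2 hy.2 hD.2
          · exact abs_prod_pow_le α hy.2
      _ = (α a + ∑ i ∈ s, α i : ℕ) * η ^ (α a + ∑ i ∈ s, α i - 1) * D := by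
          have h₁ := natCast_mul_pow_pred_mul_pow η (∑ i ∈ s, α i) (α a)
          have h₂ := natCast_mul_pow_pred_mul_pow η (α a) (∑ i ∈ s, α i)
          rw [add_comm (∑ i ∈ s, α i)] at h₁
          push_cast at h₁ h₂ ⊢
          linear_combination D * h₁ + D * h₂

end MonomialLipschitz

theorem sum_mSet_eq_sum_mDeg {M : Type*} [AddCommMonoid M] (n d : ℕ) (f : (Fin d → ℕ) → M) :
    ∑ α ∈ mSet n d, f α = ∑ k ∈ Finset.range (n + 1), ∑ α ∈ mDeg n d k, f α := by
  rw [← Finset.sum_fiberwise_of_maps_to (s := mSet n d) (t := Finset.range (n + 1))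
    (g := fun α => ∑ i, α i)
    fun α hα => Finset.mem_range.2 (Nat.lt_succ_of_le (Finset.mem_filter.1 hα).2)]
  refine Finset.sum_congr rfl fun k hk => ?_
  rw [mSet, mDeg, Finset.filter_filter]
  congr 1
  refine Finset.filter_congr fun α _ => ⟨And.right, fun h => ⟨?_, h⟩⟩
  rw [h]; exact Nat.lt_succ_iff.1 (Finset.mem_range.1 hk)

theorem abs_Ppoly_sub_le {n d : ℕ} {Ω : (Fin d → ℕ) → ℝ → ℝ} {s η D : ℝ} {x y : Fin d → ℝ}
    (hx : ∀ i, |x i| ≤ η) (hy : ∀ i, |y i| ≤ η) (hD : ∀ i, |x i - y i| ≤ D) :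
    |Ppoly n d Ω s x - Ppoly n d Ω s y| ≤
      ∑ k ∈ Finset.Icc 1 n, (k * η ^ (k - 1) * D) * ∑ α ∈ mDeg n d k, |Ω α s| := by
  calc |Ppoly n d Ω s x - Ppoly n d Ω s y|
      = |∑ α ∈ mSet n d, Ω α s * (∏ i, x i ^ α i - ∏ i, y i ^ α i)| := by
        simp only [Ppoly, ← Finset.sum_sub_distrib, mul_sub]
    _ ≤ ∑ α ∈ mSet n d, |Ω α s| * ((∑ i, α i : ℕ) * η ^ (∑ i, α i - 1) * D) := by
        refine (Finset.abs_sum_le_sum_abs _ _).trans (Finset.sum_le_sum fun α _ => ?_)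
        rw [abs_mul]
        gcongr
        exact abs_prod_pow_sub_prod_pow_le α (fun i _ => hx i) (fun i _ => hy i) fun i _ => hD i
    _ = ∑ k ∈ Finset.range (n + 1), ∑ α ∈ mDeg n d k, |Ω α s| * (k * η ^ (k - 1) * D) := by
        rw [sum_mSet_eq_sum_mDeg]
        refine Finset.sum_congr rfl fun k _ => Finset.sum_congr rfl fun α hα => ?_
        rw [(Finset.mem_filter.1 hα).2]
    _ = ∑ k ∈ Finset.Icc 1 n, ∑ α ∈ mDeg n d k, |Ω α s| * (k * η ^ (k - 1) * D) := by
        refine (Finset.sum_subset (fun k hk => ?_) fun k hk hk' => ?_).symm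
        · simp only [Finset.mem_Icc] at hk; exact Finset.mem_range.2 (by omega)
        · obtain rfl : k = 0 := by simp only [Finset.mem_range, Finset.mem_Icc] at hk hk'; omega
          simp
    _ = _ := Finset.sum_congr rfl fun k _ => by rw [Finset.mul_sum]; simp only [mul_comm]

/-- Summands that are not integrable have integral `0`, so the `f i` need not be integrable. -/
theorem sum_integral_le_integral_of_sum_le {α ι : Type*} [MeasurableSpace α] {μ : Measure α}
    (s : Finset ι) {f : ι → α → ℝ} {g : α → ℝ} (hf : ∀ i ∈ s, 0 ≤ᵐ[μ] f i)
    (hg : Integrable g μ) (hfg : ∀ᵐ x ∂μ, ∑ i ∈ s, f i x ≤ g x) :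
    ∑ i ∈ s, ∫ x, f i x ∂μ ≤ ∫ x, g x ∂μ := by
  classical
  have hf' := (Filter.eventually_all_finset s).2 hf
  calc ∑ i ∈ s, ∫ x, f i x ∂μ = ∑ i ∈ s with Integrable (f i) μ, ∫ x, f i x ∂μ :=
        (Finset.sum_filter_of_ne fun i _ h => not_not.1 fun hi => h (integral_undef hi)).symm
    _ = ∫ x, ∑ i ∈ s with Integrable (f i) μ, f i x ∂μ :=
        (integral_finsetSum _ fun i hi => (Finset.mem_filter.1 hi).2).symm
    _ ≤ ∫ x, g x ∂μ := by
        refine integral_mono_of_nonneg ?_ hg ?_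
        · filter_upwards [hf'] with x hx
          exact Finset.sum_nonneg fun i hi => hx i (Finset.mem_filter.1 hi).1
        · filter_upwards [hf', hfg] with x hx hx'
          exact (Finset.sum_le_sum_of_subset_of_nonneg (Finset.filter_subset _ s)
            fun i hi _ => hx i hi).trans hx'

theorem sum_abs_integral_mul_le {α ι κ : Type*} [MeasurableSpace α] {μ : Measure α}
    (J : Finset ι) (S : Finset κ) {K : ι → α → ℝ} {Δ : α → ℝ} (c : κ → ℝ) {M : κ → α → ℝ}
    (hM : ∀ k ∈ S, Integrable (fun x => (∑ j ∈ J, |K j x|) * M k x) μ)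
    (hΔ : ∀ᵐ x ∂μ, |Δ x| ≤ ∑ k ∈ S, c k * M k x) :
    ∑ j ∈ J, |∫ x, K j x * Δ x ∂μ| ≤ ∑ k ∈ S, c k * ∫ x, (∑ j ∈ J, |K j x|) * M k x ∂μ := by
  calc ∑ j ∈ J, |∫ x, K j x * Δ x ∂μ| ≤ ∑ j ∈ J, ∫ x, |K j x * Δ x| ∂μ :=
        Finset.sum_le_sum fun j _ => abs_integral_le_integral_abs
    _ ≤ ∫ x, ∑ k ∈ S, c k * ((∑ j ∈ J, |K j x|) * M k x) ∂μ := by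
        refine sum_integral_le_integral_of_sum_le J (fun j _ => ae_of_all _ fun x => abs_nonneg _)
          (integrable_finsetSum _ fun k hk => (hM k hk).const_mul _) ?_
        filter_upwards [hΔ] with x hx
        calc ∑ j ∈ J, |K j x * Δ x| = (∑ j ∈ J, |K j x|) * |Δ x| := by
              simp only [abs_mul, Finset.sum_mul]
          _ ≤ (∑ j ∈ J, |K j x|) * ∑ k ∈ S, c k * M k x := by
              gcongr
          _ = _ := by rw [Finset.mul_sum]; exact Finset.sum_congr rfl fun k _ => by ring
    _ = _ := by
        rw [integral_finsetSum _ fun k hk => (hM k hk).const_mul _]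
        exact Finset.sum_congr rfl fun k _ => integral_const_mul _ _

theorem abs_le_of_sum_range_abs_le {m : ℕ} {f : ℕ → ℝ} {B : ℝ}
    (h : ∑ j ∈ Finset.range m, |f j| ≤ B) (q : Fin m) : |f q| ≤ B :=
  (Finset.single_le_sum (fun j _ => abs_nonneg (f j)) (Finset.mem_range.2 q.isLt)).trans h

theorem sum_abs_sub_le_iSup {ι : Type*} {J : Finset ι} {t₀ η s : ℝ} {u v : ι → ℝ → ℝ}
    (hu : ∀ t ≥ t₀, ∑ j ∈ J, |u j t| ≤ η) (hv : ∀ t ≥ t₀, ∑ j ∈ J, |v j t| ≤ η)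
    (hs : t₀ ≤ s) :
    ∑ j ∈ J, |u j s - v j s| ≤ ⨆ r : Set.Ici t₀, ∑ j ∈ J, |u j r - v j r| := by
  refine le_ciSup (f := fun r : Set.Ici t₀ => ∑ j ∈ J, |u j r - v j r|) ⟨η + η, ?_⟩ ⟨s, hs⟩
  rintro _ ⟨r, rfl⟩
  refine (Finset.sum_le_sum fun j _ => abs_sub _ _).trans ?_
  rw [Finset.sum_add_distrib]
  exact add_le_add (hu r r.2) (hv r r.2)

theorem stmt15_general (n : ℕ) (t₀ : ℝ)
    (Ω : (Fin (n - 1) → ℕ) → ℝ → ℝ)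
    (γ : Fin (n - 1) → ℝ)
    -- finiteness of L_k(t)
    (hIntL : ∀ t ≥ t₀, ∀ k, 1 ≤ k → k ≤ n →
      MeasureTheory.IntegrableOn
        (fun s => (∑ j ∈ Finset.range (n - 1), |kern γ j t s|) * ∑ α ∈ mDeg n (n - 1) k, |Ω α s|)
        (Set.Ioi t₀))
    (η : ℝ) (z₁ z₂ : ℝ → ℝ)
    (hb₁ : ∀ t ≥ t₀, ∑ j ∈ Finset.range (n - 1), |iDer t₀ j z₁ t| ≤ η)
    (hb₂ : ∀ t ≥ t₀, ∑ j ∈ Finset.range (n - 1), |iDer t₀ j z₂ t| ≤ η) :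
    ∀ t ≥ t₀,
      ∑ j ∈ Finset.range (n - 1),
        |∫ s in Set.Ioi t₀, kern γ j t s *
          (Ppoly n (n - 1) Ω s (fun q => iDer t₀ (q : ℕ) z₁ s) -
            Ppoly n (n - 1) Ω s (fun q => iDer t₀ (q : ℕ) z₂ s))| ≤
      (∑ k ∈ Finset.Icc 1 n, (k : ℝ) * η ^ (k - 1) * Lfun n t₀ γ Ω k t) *
        ⨆ s : Set.Ici t₀,
          ∑ j ∈ Finset.range (n - 1), |iDer t₀ j z₁ (s : ℝ) - iDer t₀ j z₂ (s : ℝ)| := by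
  intro t ht
  set D := ⨆ s : Set.Ici t₀,
    ∑ j ∈ Finset.range (n - 1), |iDer t₀ j z₁ (s : ℝ) - iDer t₀ j z₂ (s : ℝ)|
  have hP : ∀ s > t₀,
      |Ppoly n (n - 1) Ω s (fun q => iDer t₀ (q : ℕ) z₁ s) -
        Ppoly n (n - 1) Ω s (fun q => iDer t₀ (q : ℕ) z₂ s)| ≤
      ∑ k ∈ Finset.Icc 1 n, (k * η ^ (k - 1) * D) * ∑ α ∈ mDeg n (n - 1) k, |Ω α s| :=
    fun s hs => abs_Ppoly_sub_le (abs_le_of_sum_range_abs_le (hb₁ s hs.le))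
      (abs_le_of_sum_range_abs_le (hb₂ s hs.le))
      (abs_le_of_sum_range_abs_le (sum_abs_sub_le_iSup hb₁ hb₂ hs.le))
  calc _ ≤ ∑ k ∈ Finset.Icc 1 n, (k * η ^ (k - 1) * D) * Lfun n t₀ γ Ω k t :=
        sum_abs_integral_mul_le _ _ _
          (fun k hk => hIntL t ht k (Finset.mem_Icc.1 hk).1 (Finset.mem_Icc.1 hk).2)
          (ae_restrict_of_forall_mem measurableSet_Ioi hP)
    _ = _ := by
        rw [Finset.sum_mul]
        exact Finset.sum_congr rfl fun k _ => by ring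

theorem stmt15 (n : ℕ) (hn : 2 ≤ n) (t₀ : ℝ)
    (Ω : (Fin (n - 1) → ℕ) → ℝ → ℝ)
    (hΩ : ∀ α ∈ mSet n (n - 1), ContinuousOn (Ω α) (Set.Ici t₀))
    (γ : Fin (n - 1) → ℝ)
    -- (R1)
    (hγanti : StrictAnti γ) (hγne : ∀ ℓ, γ ℓ ≠ 0)
    -- finiteness of L_k(t)
    (hIntL : ∀ t ≥ t₀, ∀ k, 1 ≤ k → k ≤ n →
      MeasureTheory.IntegrableOn
        (fun s => (∑ j ∈ Finset.range (n - 1), |kern γ j t s|) * ∑ α ∈ mDeg n (n - 1) k, |Ω α s|)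
        (Set.Ioi t₀))
    (η : ℝ) (hη : 0 < η) (z₁ z₂ : ℝ → ℝ)
    (hz₁ : ContDiffOn ℝ (n - 2 : ℕ) z₁ (Set.Ici t₀))
    (hz₂ : ContDiffOn ℝ (n - 2 : ℕ) z₂ (Set.Ici t₀))
    (hb₁ : ∀ t ≥ t₀, ∑ j ∈ Finset.range (n - 1), |iDer t₀ j z₁ t| ≤ η)
    (hb₂ : ∀ t ≥ t₀, ∑ j ∈ Finset.range (n - 1), |iDer t₀ j z₂ t| ≤ η) :
    ∀ t ≥ t₀,
      ∑ j ∈ Finset.range (n - 1),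
        |∫ s in Set.Ioi t₀, kern γ j t s *
          (Ppoly n (n - 1) Ω s (fun q => iDer t₀ (q : ℕ) z₁ s) -
            Ppoly n (n - 1) Ω s (fun q => iDer t₀ (q : ℕ) z₂ s))| ≤
      (∑ k ∈ Finset.Icc 1 n, (k : ℝ) * η ^ (k - 1) * Lfun n t₀ γ Ω k t) *
        ⨆ s : Set.Ici t₀,
          ∑ j ∈ Finset.range (n - 1), |iDer t₀ j z₁ (s : ℝ) - iDer t₀ j z₂ (s : ℝ)| :=
  stmt15_general n t₀ Ω γ hIntL η z₁ z₂ hb₁ hb₂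
end
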